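/- Let H be a finitely generated group, and let G be a group with a surjective group homomorphism φ : G → H whose kernel is contained in the center of G (i.e., G is a central extension of H). Then the commutator subgroup [G, G] is finitely generated if and only if the commutator subgroup [H, H] is finitely generated. -/

import Mathlib

/-!
Since the kernel is central, a commutator in `G` only depends on the images of its entries in `H`.
Hence `G` and `[G, G]` are finitely generated modulo the center `Z`: `G = ⟨X⟩ Z` and
`[G, G] = ⟨T⟩ Z` with `X`, `T` finite and `⟨T⟩ ≤ [G, G]`. Then `[[G, G], [G, G]] ≤ ⟨T⟩`, which makes
`d ↦ ⁅x, d⁆` multiplicative on `⟨T⟩` modulo `⟨T⟩`; so the subgroup `F` generated by `T`, `⁅X, T⁆`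
and `⁅X, X⁆` contains `⁅g, e⁆` for all `g ∈ G`, `e ∈ [G, G]`. Thus `F` is normal, `G ⧸ F` is
generated by the pairwise commuting images of `X ∪ Z`, and `[G, G] = F`.
-/

open scoped commutatorElement

section

open Subgroup

variable {G : Type*} [Group G]

theorem commutatorElement_mem_commutator (a b : G) : ⁅a, b⁆ ∈ commutator G :=
  commutator_mem_commutator (mem_top a) (mem_top b)

theorem commutatorElement_center_left {z : G} (hz : z ∈ center G) (a : G) : ⁅z, a⁆ = 1 :=
  commutatorElement_eq_one_iff_mul_comm.2 (mem_center_iff.1 hz a).symm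

theorem commutatorElement_center_right {z : G} (hz : z ∈ center G) (a : G) : ⁅a, z⁆ = 1 :=
  commutatorElement_eq_one_iff_mul_comm.2 (mem_center_iff.1 hz a)

theorem commutatorElement_mul_center_left {z : G} (hz : z ∈ center G) (a b : G) :
    ⁅a * z, b⁆ = ⁅a, b⁆ := by
  rw [commutatorElement_mul_left_eq_conj_mul, commutatorElement_center_left hz, mul_one,
    mul_inv_cancel, one_mul]

theorem commutatorElement_mul_center_right {z : G} (hz : z ∈ center G) (a b : G) :
    ⁅a, b * z⁆ = ⁅a, b⁆ := by
  rw [commutatorElement_mul_right_eq_mul_conj, commutatorElement_center_right hz, mul_one,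
    mul_inv_cancel_right]

theorem commutator_le_of_le_sup_center {A₁ A₂ B₁ B₂ : Subgroup G} (h₁ : A₁ ≤ B₁ ⊔ center G)
    (h₂ : A₂ ≤ B₂ ⊔ center G) : ⁅A₁, A₂⁆ ≤ ⁅B₁, B₂⁆ := by
  rw [commutator_le]
  intro a ha b hb
  obtain ⟨a', ha', z, hz, rfl⟩ := mem_sup_of_normal_right.1 (h₁ ha)
  obtain ⟨b', hb', w, hw, rfl⟩ := mem_sup_of_normal_right.1 (h₂ hb)
  rw [commutatorElement_mul_center_left hz, commutatorElement_mul_center_right hw]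
  exact commutator_mem_commutator ha' hb'

theorem exists_fg_le_map_eq {H : Type*} [Group H] (f : G →* H) (C : Subgroup G)
    (hC : (C.map f).FG) : ∃ D ≤ C, D.FG ∧ D.map f = C.map f := by
  obtain ⟨S, hS, hSfin⟩ := (fg_iff _).1 hC
  have hSC : S ⊆ f '' C := fun s hs => mem_map.1 (hS ▸ subset_closure hs :)
  obtain ⟨T, hTC, hTfin, hTS⟩ := Set.exists_subset_image_finite_and
    (p := (Subgroup.closure · = C.map f)) |>.1 ⟨S, hSC, hSfin, hS⟩
  refine ⟨closure T, (closure_le C).2 hTC, (fg_iff _).2 ⟨T, rfl, hTfin⟩, ?_⟩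
  rw [MonoidHom.map_closure, hTS]

theorem le_sup_ker_of_map_eq {H : Type*} [Group H] {f : G →* H} {A B : Subgroup G}
    (h : A.map f = B.map f) : B ≤ A ⊔ f.ker := by
  rw [← comap_map_eq, h]
  exact le_comap_map f B

theorem Subgroup.FG.map {H : Type*} [Group H] {A : Subgroup G} (hA : A.FG) (f : G →* H) :
    (A.map f).FG := by
  obtain ⟨S, hS, hSfin⟩ := (fg_iff _).1 hA
  exact (fg_iff _).2 ⟨f '' S, by rw [← MonoidHom.map_closure, hS], hSfin.image f⟩

theorem commutator_le_of_commutatorElement_mem {N : Subgroup G} [N.Normal] {Y : Set G}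
    (hY : closure Y = ⊤) (hYN : ∀ y ∈ Y, ∀ y' ∈ Y, ⁅y, y'⁆ ∈ N) : commutator G ≤ N := by
  let π := QuotientGroup.mk' N
  have hcomm : ∀ q ∈ π '' Y, ∀ q' ∈ π '' Y, q * q' = q' * q := by
    rintro _ ⟨y, hy, rfl⟩ _ ⟨y', hy', rfl⟩
    rw [← commutatorElement_eq_one_iff_mul_comm, ← map_commutatorElement,
      QuotientGroup.mk'_apply, QuotientGroup.eq_one_iff]
    exact hYN y hy y' hy'
  have htop : closure (π '' Y) = ⊤ := by
    rw [← MonoidHom.map_closure, hY, map_top_of_surjective _ (QuotientGroup.mk'_surjective N)]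
  have hQ : ∀ q q' : G ⧸ N, q * q' = q' * q := fun q q' => by
    have := isMulCommutative_closure hcomm
    exact setLike_mul_comm (s := closure (π '' Y)) (htop ▸ mem_top q) (htop ▸ mem_top q')
  rw [commutator_eq_closure, closure_le]
  rintro _ ⟨a, b, rfl⟩
  rw [SetLike.mem_coe, ← QuotientGroup.eq_one_iff, ← QuotientGroup.mk'_apply,
    map_commutatorElement, commutatorElement_eq_one_iff_mul_comm]
  exact hQ _ _

section CommutatorModulo

variable {F : Subgroup G} (hCCF : ⁅commutator G, commutator G⁆ ≤ F)
include hCCF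

theorem commutatorElement_mem_of_mem_closure {T : Set G} (hT : closure T ≤ commutator G)
    {x : G} (hx : ∀ t ∈ T, ⁅x, t⁆ ∈ F) {d : G} (hd : d ∈ closure T) : ⁅x, d⁆ ∈ F := by
  induction hd using closure_induction with
  | mem t ht => exact hx t ht
  | one => rw [commutatorElement_one_right]; exact one_mem F
  | mul a b ha _ iha ihb =>
    have key : ⁅x, a * b⁆ = ⁅x, a⁆ * (⁅a, ⁅x, b⁆⁆ * ⁅x, b⁆) := by
      simp only [commutatorElement_def]; group
    rw [key]
    have hmid := hCCF (commutator_mem_commutator (hT ha) (commutatorElement_mem_commutator x b))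
    exact mul_mem iha (mul_mem hmid ihb)
  | inv a ha iha =>
    have key : ⁅x, a⁻¹⁆ = ⁅a, ⁅x, a⁻¹⁆⁆⁻¹ * ⁅x, a⁆⁻¹ := by
      simp only [commutatorElement_def]; group
    rw [key]
    have hmid := hCCF (commutator_mem_commutator (hT ha) (commutatorElement_mem_commutator x a⁻¹))
    exact mul_mem (inv_mem hmid) (inv_mem iha)

theorem commutator_top_le_of_closure_eq_top {Y : Set G} (hY : closure Y = ⊤)
    (hYF : ∀ y ∈ Y, ∀ e ∈ commutator G, ⁅y, e⁆ ∈ F) : ⁅(⊤ : Subgroup G), commutator G⁆ ≤ F := by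
  rw [commutator_le]
  rintro g -
  have hg : g ∈ closure Y := by rw [hY]; exact mem_top g
  induction hg using closure_induction with
  | mem y hy => exact hYF y hy
  | one => intro e _; rw [commutatorElement_one_left]; exact one_mem F
  | mul a b _ _ iha ihb =>
    intro e he
    have key : ⁅a * b, e⁆ = ⁅a, ⁅b, e⁆⁆ * ⁅b, e⁆ * ⁅a, e⁆ := by
      simp only [commutatorElement_def]; group
    rw [key]
    exact mul_mem (mul_mem (iha _ (commutatorElement_mem_commutator _ _)) (ihb e he)) (iha e he)
  | inv a _ iha =>
    intro e he
    have he' : a⁻¹ * e⁻¹ * a⁻¹⁻¹ ∈ commutator G :=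
      Normal.conj_mem inferInstance _ (inv_mem he) a⁻¹
    have key : ⁅a⁻¹, e⁆ = ⁅e, ⁅a, a⁻¹ * e⁻¹ * a⁻¹⁻¹⁆⁆ * ⁅a, a⁻¹ * e⁻¹ * a⁻¹⁻¹⁆ := by
      simp only [commutatorElement_def]; group
    rw [key]
    exact mul_mem (hCCF (commutator_mem_commutator he (commutatorElement_mem_commutator _ _)))
      (iha _ he')

end CommutatorModulo

theorem commutator_fg_of_le_sup_center {E D : Subgroup G} (hE : E.FG) (hEZ : ⊤ ≤ E ⊔ center G)
    (hD : D.FG) (hDC : D ≤ commutator G) (hCD : commutator G ≤ D ⊔ center G) :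
    (commutator G).FG := by
  obtain ⟨X, rfl, hXfin⟩ := (fg_iff E).1 hE
  obtain ⟨T, rfl, hTfin⟩ := (fg_iff D).1 hD
  set F := closure (T ∪ Set.image2 (⁅·, ·⁆) X T ∪ Set.image2 (⁅·, ·⁆) X X) with hF
  have hFC : F ≤ commutator G := by
    rw [hF, closure_le]
    rintro _ ((ht | ⟨x, -, t, -, rfl⟩) | ⟨x, -, y, -, rfl⟩)
    · exact hDC (subset_closure ht)
    · exact commutatorElement_mem_commutator x t
    · exact commutatorElement_mem_commutator x y
  have hCCF : ⁅commutator G, commutator G⁆ ≤ F :=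
    (commutator_le_of_le_sup_center hCD hCD).trans <|
      (commutator_le_self _).trans <| closure_mono fun t ht => Or.inl (Or.inl ht)
  have hXZ : closure (X ∪ center G) = ⊤ := by
    rw [Subgroup.closure_union, closure_eq]; exact top_le_iff.1 hEZ
  have hGC : ⁅(⊤ : Subgroup G), commutator G⁆ ≤ F := by
    refine commutator_top_le_of_closure_eq_top hCCF hXZ ?_
    rintro y (hy | hy) e he
    · obtain ⟨d, hd, z, hz, rfl⟩ := mem_sup_of_normal_right.1 (hCD he)
      rw [commutatorElement_mul_center_right hz]
      exact commutatorElement_mem_of_mem_closure hCCF hDC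
        (fun t ht => subset_closure (Or.inl (Or.inr ⟨y, hy, t, ht, rfl⟩))) hd
    · rw [commutatorElement_center_left hy]; exact one_mem F
  have : F.Normal := commutator_top_left_le_iff.1 ((commutator_mono le_rfl hFC).trans hGC)
  have hCF : commutator G ≤ F := by
    refine commutator_le_of_commutatorElement_mem hXZ ?_
    rintro y (hy | hy) y' hy'
    · rcases hy' with hy' | hy'
      · exact subset_closure (Or.inr ⟨y, hy, y', hy', rfl⟩)
      · rw [commutatorElement_center_right hy']; exact one_mem F
    · rw [commutatorElement_center_left hy]; exact one_mem F
  rw [le_antisymm hCF hFC]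
  exact (fg_iff _).2 ⟨_, rfl, (hTfin.union (hXfin.image2 _ hTfin)).union (hXfin.image2 _ hXfin)⟩

end

/-- Let `H` be a finitely generated group and `G` a central extension of `H`. Then `[G, G]`
is finitely generated if and only if `[H, H]` is finitely generated. -/
theorem commutator_fg_iff_of_central_extension_of_fg
    {G H : Type*} [Group G] [Group H] (φ : G →* H)
    (hsurj : Function.Surjective φ) (hker : φ.ker ≤ Subgroup.center G)
    (hH : Group.FG H) :
    (commutator G).FG ↔ (commutator H).FG := by
  have hmap : (commutator G).map φ = commutator H := by
    rw [commutator_def, commutator_def, Subgroup.map_commutator,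
      Subgroup.map_top_of_surjective φ hsurj]
  refine ⟨fun hG => hmap ▸ hG.map φ, fun hH' => ?_⟩
  obtain ⟨D, hDC, hD, hDmap⟩ := exists_fg_le_map_eq φ (commutator G) (hmap ▸ hH')
  obtain ⟨E, -, hE, hEmap⟩ := exists_fg_le_map_eq φ ⊤
    (by rwa [Subgroup.map_top_of_surjective φ hsurj, ← Group.fg_def])
  exact commutator_fg_of_le_sup_center hE
    ((le_sup_ker_of_map_eq hEmap).trans (sup_le_sup_left hker E)) hD hDC
    ((le_sup_ker_of_map_eq hDmap).trans (sup_le_sup_left hker D))
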